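/- In a category C equipped with a left summability structure: a finite family (f_i)_{i ∈ I} of morphisms in C(X, Y) is summable if and only if for every partition I₁, …, Iₙ of I (possibly with empty blocks), each subfamily (f_i)_{i ∈ I_j} is summable and the family of sums (Σ_{i ∈ I_j} f_i)_{j ∈ {1,…,n}} is summable; moreover then Σ_{i ∈ I} f_i = Σ_{j=1}^{n} Σ_{i ∈ I_j} f_i. -/
import Mathlib


open CategoryTheory CategoryTheory.Limits
open scoped Classical

universe v u

/-- A summable pairing structure on a category `C` whose hom-sets carry a
distinguished morphism `0` satisfying `0 ∘ f = 0`. -/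
structure SummablePairing (C : Type u) [Category.{v} C] where
  /-- the distinguished zero morphism of each hom-set -/
  zero : ∀ X Y : C, X ⟶ Y
  /-- `0 ∘ f = 0` -/
  comp_zero : ∀ {X Y Z : C} (f : X ⟶ Y), f ≫ zero Y Z = zero X Z
  /-- the map on objects -/
  D : C → C
  p0 : ∀ X : C, D X ⟶ X
  p1 : ∀ X : C, D X ⟶ X
  s : ∀ X : C, D X ⟶ X
  /-- `p0` and `p1` are jointly monic -/
  jointly_monic : ∀ {Y X : C} {f g : Y ⟶ D X},
    f ≫ p0 X = g ≫ p0 X → f ≫ p1 X = g ≫ p1 X → f = g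

namespace SummablePairing

variable {C : Type u} [Category.{v} C]

/-- `f0 ⊞ f1` : summability of two parallel morphisms. -/
def Summable (S : SummablePairing C) {X Y : C} (f0 f1 : X ⟶ Y) : Prop :=
  ∃ w : X ⟶ S.D Y, w ≫ S.p0 Y = f0 ∧ w ≫ S.p1 Y = f1

/-- the witness `⟨f0, f1⟩` of a summable pair (an arbitrary default otherwise) -/
noncomputable def wit (S : SummablePairing C) {X Y : C} (f0 f1 : X ⟶ Y) : X ⟶ S.D Y :=
  if h : S.Summable f0 f1 then h.choose else S.zero X (S.D Y)

/-- the sum `f0 + f1` of a summable pair -/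
noncomputable def add (S : SummablePairing C) {X Y : C} (f0 f1 : X ⟶ Y) : X ⟶ Y :=
  S.wit f0 f1 ≫ S.s Y

/-- additive morphisms -/
def Additive (S : SummablePairing C) {Y Z : C} (h : Y ⟶ Z) : Prop :=
  (∀ X : C, S.zero X Y ≫ h = S.zero X Z) ∧
  (∀ (X : C) (f0 f1 : X ⟶ Y), S.Summable f0 f1 →
    S.Summable (f0 ≫ h) (f1 ≫ h) ∧ S.add f0 f1 ≫ h = S.add (f0 ≫ h) (f1 ≫ h))

/-- a left pre-summability structure: `p0`, `p1` and `s` are additive -/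
def IsLeftPreSummability (S : SummablePairing C) : Prop :=
  (∀ X : C, S.Additive (S.p0 X)) ∧ (∀ X : C, S.Additive (S.p1 X)) ∧
  (∀ X : C, S.Additive (S.s X))

/-- axiom (D-com) -/
def Dcom (S : SummablePairing C) : Prop :=
  ∀ X : C, S.Summable (S.p1 X) (S.p0 X) ∧ S.add (S.p1 X) (S.p0 X) = S.s X

/-- axiom (D-zero) -/
def Dzero (S : SummablePairing C) : Prop :=
  ∀ X : C, S.Summable (𝟙 X) (S.zero X X) ∧ S.Summable (S.zero X X) (𝟙 X) ∧
    S.add (𝟙 X) (S.zero X X) = 𝟙 X ∧ S.add (S.zero X X) (𝟙 X) = 𝟙 X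

/-- axiom (D-witness) -/
def Dwitness (S : SummablePairing C) : Prop :=
  ∀ (Y X : C) (f g : Y ⟶ S.D X),
    S.Summable (f ≫ S.s X) (g ≫ S.s X) → S.Summable f g

/-- a left summability structure -/
def IsLeftSummability (S : SummablePairing C) : Prop :=
  S.IsLeftPreSummability ∧ S.Dcom ∧ S.Dzero ∧ S.Dwitness

/-- `ι₀ = ⟨id, 0⟩` -/
noncomputable def iota0 (S : SummablePairing C) (X : C) : X ⟶ S.D X :=
  S.wit (𝟙 X) (S.zero X X)

/-- `θ = ⟨π₀ ∘ π₀, π₁ ∘ π₀ + π₀ ∘ π₁⟩` -/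
noncomputable def theta (S : SummablePairing C) (X : C) : S.D (S.D X) ⟶ S.D X :=
  S.wit (S.p0 (S.D X) ≫ S.p0 X)
    (S.add (S.p0 (S.D X) ≫ S.p1 X) (S.p1 (S.D X) ≫ S.p0 X))

/-- `l = ⟨⟨π₀, 0⟩, ⟨0, π₁⟩⟩` -/
noncomputable def lmor (S : SummablePairing C) (X : C) : S.D X ⟶ S.D (S.D X) :=
  S.wit (S.wit (S.p0 X) (S.zero (S.D X) X)) (S.wit (S.zero (S.D X) X) (S.p1 X))

/-- `c = ⟨⟨π₀ ∘ π₀, π₀ ∘ π₁⟩, ⟨π₁ ∘ π₀, π₁ ∘ π₁⟩⟩` -/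
noncomputable def cmor (S : SummablePairing C) (X : C) : S.D (S.D X) ⟶ S.D (S.D X) :=
  S.wit (S.wit (S.p0 (S.D X) ≫ S.p0 X) (S.p1 (S.D X) ≫ S.p0 X))
        (S.wit (S.p0 (S.D X) ≫ S.p1 X) (S.p1 (S.D X) ≫ S.p1 X))

end SummablePairing

/-- summability of a finite family of morphisms (represented as a multiset),
together with its sum, defined inductively -/
inductive SummablePairing.MSummable {C : Type u} [Category.{v} C] (S : SummablePairing C) :
    ∀ {X Y : C}, Multiset (X ⟶ Y) → (X ⟶ Y) → Prop
  | nil {X Y : C} : SummablePairing.MSummable S (0 : Multiset (X ⟶ Y)) (S.zero X Y)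
  | cons {X Y : C} {m : Multiset (X ⟶ Y)} {t f : X ⟶ Y} :
      SummablePairing.MSummable S m t → S.Summable t f →
      SummablePairing.MSummable S (f ::ₘ m) (S.add t f)

/-- the data making a left summability structure a pre-differential structure:
an operator `D` on morphisms with `π₀ ∘ D f = f ∘ π₀` -/
structure DiffOp {C : Type u} [Category.{v} C] (S : SummablePairing C) where
  map : ∀ {X Y : C}, (X ⟶ Y) → (S.D X ⟶ S.D Y)
  map_p0 : ∀ {X Y : C} (f : X ⟶ Y), map f ≫ S.p0 Y = S.p0 X ≫ f

namespace DiffOp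

variable {C : Type u} [Category.{v} C] {S : SummablePairing C}

/-- the differential `∂f = π₁ ∘ D f` -/
def dd (Dm : DiffOp S) {X Y : C} (f : X ⟶ Y) : S.D X ⟶ Y := Dm.map f ≫ S.p1 Y

/-- D-linear morphisms -/
def DLinear (Dm : DiffOp S) {X Y : C} (f : X ⟶ Y) : Prop :=
  Dm.map f ≫ S.p1 Y = S.p1 X ≫ f ∧ Dm.map f ≫ S.s Y = S.s X ≫ f ∧
  (∀ U : C, S.zero U X ≫ f = S.zero U Y)

/-- axiom (Dproj-lin) -/
def DprojLin (Dm : DiffOp S) : Prop :=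
  (∀ X : C, Dm.DLinear (S.p0 X)) ∧ (∀ X : C, Dm.DLinear (S.p1 X))

/-- axiom (Dsum-lin) -/
def DsumLin (Dm : DiffOp S) : Prop :=
  (∀ X : C, Dm.DLinear (S.s X)) ∧ (∀ X Y : C, Dm.DLinear (S.zero X Y))

/-- axiom (D-chain): functoriality -/
def Dchain (Dm : DiffOp S) : Prop :=
  (∀ X : C, Dm.map (𝟙 X) = 𝟙 (S.D X)) ∧
  (∀ (X Y Z : C) (f : X ⟶ Y) (g : Y ⟶ Z), Dm.map (f ≫ g) = Dm.map f ≫ Dm.map g)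

/-- axiom (D-add): naturality of `ι₀` and `θ` -/
def Dadd (Dm : DiffOp S) : Prop :=
  (∀ (X Y : C) (f : X ⟶ Y), S.iota0 X ≫ Dm.map f = f ≫ S.iota0 Y) ∧
  (∀ (X Y : C) (f : X ⟶ Y), S.theta X ≫ Dm.map f = Dm.map (Dm.map f) ≫ S.theta Y)

/-- axiom (D-lin): naturality of `l` -/
def Dlin (Dm : DiffOp S) : Prop :=
  ∀ (X Y : C) (f : X ⟶ Y), Dm.map f ≫ S.lmor Y = S.lmor X ≫ Dm.map (Dm.map f)

/-- axiom (D-Schwarz): naturality of `c` -/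
def Dschwarz (Dm : DiffOp S) : Prop :=
  ∀ (X Y : C) (f : X ⟶ Y),
    S.cmor X ≫ Dm.map (Dm.map f) = Dm.map (Dm.map f) ≫ S.cmor Y

end DiffOp

namespace SummablePairing

variable {C : Type u} [Category.{v} C] (S : SummablePairing C)

theorem wit_spec {X Y : C} {f g : X ⟶ Y} (h : S.Summable f g) :
    S.wit f g ≫ S.p0 Y = f ∧ S.wit f g ≫ S.p1 Y = g := by
  rw [wit, dif_pos h]; exact h.choose_spec

theorem wit_eq {X Y : C} {f g : X ⟶ Y} {w : X ⟶ S.D Y}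
    (h0 : w ≫ S.p0 Y = f) (h1 : w ≫ S.p1 Y = g) : S.wit f g = w := by
  have hs : S.Summable f g := ⟨w, h0, h1⟩
  have hw := S.wit_spec hs
  exact S.jointly_monic (hw.1.trans h0.symm) (hw.2.trans h1.symm)

theorem add_eq' {X Y : C} {f g : X ⟶ Y} {w : X ⟶ S.D Y}
    (h0 : w ≫ S.p0 Y = f) (h1 : w ≫ S.p1 Y = g) : S.add f g = w ≫ S.s Y := by
  rw [add, S.wit_eq h0 h1]

theorem add_def {X Y : C} (f g : X ⟶ Y) : S.add f g = S.wit f g ≫ S.s Y := rfl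

theorem summable_zero_right (hS : S.IsLeftSummability) {X Y : C} (f : X ⟶ Y) :
    S.Summable f (S.zero X Y) ∧ S.add f (S.zero X Y) = f := by
  obtain ⟨h1, -, hadd, -⟩ := hS.2.2.1 Y
  obtain ⟨hw0, hw1⟩ := S.wit_spec h1
  have e0 : (f ≫ S.wit (𝟙 Y) (S.zero Y Y)) ≫ S.p0 Y = f := by
    rw [Category.assoc, hw0, Category.comp_id]
  have e1 : (f ≫ S.wit (𝟙 Y) (S.zero Y Y)) ≫ S.p1 Y = S.zero X Y := by
    rw [Category.assoc, hw1, S.comp_zero]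
  refine ⟨⟨_, e0, e1⟩, ?_⟩
  rw [S.add_eq' e0 e1, Category.assoc, ← S.add_def, hadd, Category.comp_id]

theorem summable_zero_left (hS : S.IsLeftSummability) {X Y : C} (f : X ⟶ Y) :
    S.Summable (S.zero X Y) f ∧ S.add (S.zero X Y) f = f := by
  obtain ⟨-, h1, -, hadd⟩ := hS.2.2.1 Y
  obtain ⟨hw0, hw1⟩ := S.wit_spec h1
  have e0 : (f ≫ S.wit (S.zero Y Y) (𝟙 Y)) ≫ S.p0 Y = S.zero X Y := by
    rw [Category.assoc, hw0, S.comp_zero]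
  have e1 : (f ≫ S.wit (S.zero Y Y) (𝟙 Y)) ≫ S.p1 Y = f := by
    rw [Category.assoc, hw1, Category.comp_id]
  refine ⟨⟨_, e0, e1⟩, ?_⟩
  rw [S.add_eq' e0 e1, Category.assoc, ← S.add_def, hadd, Category.comp_id]

theorem summable_comm (hS : S.IsLeftSummability) {X Y : C} {f g : X ⟶ Y}
    (h : S.Summable f g) : S.Summable g f ∧ S.add g f = S.add f g := by
  obtain ⟨hc, hcs⟩ := hS.2.1 Y
  obtain ⟨hg0, hg1⟩ := S.wit_spec hc
  obtain ⟨hw0, hw1⟩ := S.wit_spec h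
  have e0 : (S.wit f g ≫ S.wit (S.p1 Y) (S.p0 Y)) ≫ S.p0 Y = g := by
    rw [Category.assoc, hg0, hw1]
  have e1 : (S.wit f g ≫ S.wit (S.p1 Y) (S.p0 Y)) ≫ S.p1 Y = f := by
    rw [Category.assoc, hg1, hw0]
  refine ⟨⟨_, e0, e1⟩, ?_⟩
  rw [S.add_eq' e0 e1, Category.assoc, ← S.add_def, hcs, S.add_def]

theorem summable_precomp {W X Y : C} {f g : X ⟶ Y} (h : S.Summable f g) (e : W ⟶ X) :
    S.Summable (e ≫ f) (e ≫ g) ∧ S.add (e ≫ f) (e ≫ g) = e ≫ S.add f g := by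
  obtain ⟨hw0, hw1⟩ := S.wit_spec h
  have e0 : (e ≫ S.wit f g) ≫ S.p0 Y = e ≫ f := by rw [Category.assoc, hw0]
  have e1 : (e ≫ S.wit f g) ≫ S.p1 Y = e ≫ g := by rw [Category.assoc, hw1]
  exact ⟨⟨_, e0, e1⟩, by rw [S.add_eq' e0 e1, Category.assoc, ← S.add_def]⟩

theorem summable_assoc (hS : S.IsLeftSummability) {X Y : C} {f g h : X ⟶ Y}
    (hfg : S.Summable f g) (hh : S.Summable (S.add f g) h) :
    S.Summable g h ∧ S.Summable f (S.add g h) ∧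
      S.add (S.add f g) h = S.add f (S.add g h) := by
  obtain ⟨-, hz1, -, hzadd⟩ := hS.2.2.1 Y
  obtain ⟨hj0, hj1⟩ := S.wit_spec hz1
  -- b = h ≫ ⟨0, id⟩ has b ≫ p0 = 0, b ≫ p1 = h, b ≫ s = h
  set b : X ⟶ S.D Y := h ≫ S.wit (S.zero Y Y) (𝟙 Y) with hb
  have hb0 : b ≫ S.p0 Y = S.zero X Y := by rw [hb, Category.assoc, hj0, S.comp_zero]
  have hb1 : b ≫ S.p1 Y = h := by rw [hb, Category.assoc, hj1, Category.comp_id]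
  have hbs : b ≫ S.s Y = h := by
    rw [hb, Category.assoc, ← S.add_def, hzadd, Category.comp_id]
  have has : S.wit f g ≫ S.s Y = S.add f g := (S.add_def f g).symm
  have hab : S.Summable (S.wit f g) b := by
    apply hS.2.2.2
    rw [has, hbs]; exact hh
  obtain ⟨hw0, hw1⟩ := S.wit_spec hfg
  have hp0 := ((hS.1.1 Y).2 X _ _ hab).2
  have hp0s := ((hS.1.1 Y).2 X _ _ hab).1
  have hp1 := ((hS.1.2.1 Y).2 X _ _ hab).2
  have hp1s := ((hS.1.2.1 Y).2 X _ _ hab).1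
  have hps := ((hS.1.2.2 Y).2 X _ _ hab).2
  rw [hw0, hb0] at hp0 hp0s
  rw [hw1, hb1] at hp1 hp1s
  rw [has, hbs] at hps
  have hzr := S.summable_zero_right hS f
  rw [hzr.2] at hp0
  -- V := add (wit f g) b witnesses f ⊞ (g + h)
  refine ⟨hp1s, ⟨S.add (S.wit f g) b, hp0, hp1⟩, ?_⟩
  rw [← hps]
  exact (S.add_eq' hp0 hp1).symm

theorem summable_assoc' (hS : S.IsLeftSummability) {X Y : C} {f g h : X ⟶ Y}
    (hgh : S.Summable g h) (hf : S.Summable f (S.add g h)) :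
    S.Summable f g ∧ S.Summable (S.add f g) h ∧
      S.add f (S.add g h) = S.add (S.add f g) h := by
  obtain ⟨hhg, ehg⟩ := S.summable_comm hS hgh
  obtain ⟨hghf, eghf⟩ := S.summable_comm hS hf
  rw [← ehg] at hghf eghf
  obtain ⟨hgf, hhgf, ehgf⟩ := S.summable_assoc hS hhg hghf
  obtain ⟨hfg, efg⟩ := S.summable_comm hS hgf
  obtain ⟨hgfh, egfh⟩ := S.summable_comm hS hhgf
  rw [← efg] at hgfh
  refine ⟨hfg, hgfh, ?_⟩
  rw [← ehg, ← eghf, ehgf, ← egfh, ← efg]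

theorem summable_exchange (hS : S.IsLeftSummability) {X Y : C} {t f g : X ⟶ Y}
    (htf : S.Summable t f) (hg : S.Summable (S.add t f) g) :
    S.Summable t g ∧ S.Summable (S.add t g) f ∧
      S.add (S.add t f) g = S.add (S.add t g) f := by
  obtain ⟨hfg, htfg, e1⟩ := S.summable_assoc hS htf hg
  obtain ⟨hgf, egf⟩ := S.summable_comm hS hfg
  rw [← egf] at htfg
  obtain ⟨htg, htgf, e2⟩ := S.summable_assoc' hS hgf htfg
  exact ⟨htg, htgf, by rw [e1, ← egf, e2]⟩

theorem msummable_zero {X Y : C} {t : X ⟶ Y}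
    (h : S.MSummable (0 : Multiset (X ⟶ Y)) t) : t = S.zero X Y := by
  generalize hm : (0 : Multiset (X ⟶ Y)) = m at h
  cases h with
  | nil => rfl
  | cons h1 h2 => exact absurd hm.symm (Multiset.cons_ne_zero)

theorem msummable_peel {X Y : C} {m : Multiset (X ⟶ Y)} {t : X ⟶ Y}
    (hS : S.IsLeftSummability) (h : S.MSummable m t) :
    ∀ (f : X ⟶ Y) (m' : Multiset (X ⟶ Y)), m = f ::ₘ m' →
      ∃ t', S.MSummable m' t' ∧ S.Summable t' f ∧ t = S.add t' f := by
  induction h with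
  | nil => intro f m' hm; exact absurd hm (Multiset.zero_ne_cons)
  | @cons m₀ t₀ g hms hsum ih =>
    intro f m' hm
    rcases Multiset.cons_eq_cons.mp hm with ⟨hfg, hmm⟩ | ⟨hne, cs, hcs1, hcs2⟩
    · subst hfg; rw [← hmm]; exact ⟨t₀, hms, hsum, rfl⟩
    · obtain ⟨t₁, ht₁, hsf, het⟩ := ih f cs hcs1
      rw [het] at hsum
      obtain ⟨ht1g, htg_f, esum⟩ := S.summable_exchange hS hsf hsum
      refine ⟨S.add t₁ g, ?_, htg_f, by rw [het, esum]⟩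
      rw [hcs2]
      exact MSummable.cons ht₁ ht1g

theorem msummable_unique (hS : S.IsLeftSummability) {X Y : C} {m : Multiset (X ⟶ Y)}
    {t t' : X ⟶ Y} (h : S.MSummable m t) (h' : S.MSummable m t') : t = t' := by
  induction m using Multiset.induction generalizing t t' with
  | empty => rw [S.msummable_zero h, S.msummable_zero h']
  | cons f m ih =>
    obtain ⟨t₁, h₁, hs₁, e₁⟩ := S.msummable_peel hS h f m rfl
    obtain ⟨t₂, h₂, hs₂, e₂⟩ := S.msummable_peel hS h' f m rfl
    rw [e₁, e₂, ih h₁ h₂]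

theorem msummable_sub (hS : S.IsLeftSummability) {X Y : C}
    {a b : Multiset (X ⟶ Y)} {t : X ⟶ Y} (h : S.MSummable (a + b) t) :
    ∃ u, S.MSummable a u := by
  induction b using Multiset.induction generalizing t with
  | empty => rw [add_zero] at h; exact ⟨t, h⟩
  | cons f b ih =>
    rw [Multiset.add_cons] at h
    obtain ⟨t', ht', -, -⟩ := S.msummable_peel hS h f (a + b) rfl
    exact ih ht'

theorem msummable_add_inv (hS : S.IsLeftSummability) {X Y : C}
    {a b : Multiset (X ⟶ Y)} {u v : X ⟶ Y}
    (ha : S.MSummable a u) (hb : S.MSummable b v) :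
    ∀ t, S.MSummable (a + b) t → S.Summable u v ∧ t = S.add u v := by
  induction hb with
  | nil =>
    intro t ht
    rw [add_zero] at ht
    have := S.msummable_unique hS ht ha
    obtain ⟨hs, he⟩ := S.summable_zero_right hS u
    exact ⟨hs, by rw [this, he]⟩
  | @cons b₀ v₀ f hb₀ hsum ih =>
    intro t ht
    rw [Multiset.add_cons] at ht
    obtain ⟨t₁, ht₁, hs₁, e₁⟩ := S.msummable_peel hS ht f (a + b₀) rfl
    obtain ⟨huv₀, e₂⟩ := ih t₁ ht₁
    rw [e₂] at hs₁ e₁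
    obtain ⟨-, hfin, efin⟩ := S.summable_assoc hS huv₀ hs₁
    exact ⟨hfin, by rw [e₁, efin]⟩

theorem msummable_add (hS : S.IsLeftSummability) {X Y : C}
    {a b : Multiset (X ⟶ Y)} {u v : X ⟶ Y}
    (ha : S.MSummable a u) (hb : S.MSummable b v) (hs : S.Summable u v) :
    S.MSummable (a + b) (S.add u v) := by
  revert hs
  induction hb with
  | nil =>
    intro hs
    obtain ⟨-, he⟩ := S.summable_zero_right hS u
    rw [add_zero, he]; exact ha
  | @cons b₀ v₀ f hb₀ hsum ih =>
    intro hs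
    obtain ⟨huv₀, hufv, e⟩ := S.summable_assoc' hS hsum hs
    rw [Multiset.add_cons, e]
    exact MSummable.cons (ih huv₀) hufv

theorem msummable_parts (hS : S.IsLeftSummability) {X Y : C} :
    ∀ (n : ℕ) (P : Fin n → Multiset (X ⟶ Y)) (t : X ⟶ Y),
      S.MSummable (∑ j, P j) t → ∀ u : Fin n → (X ⟶ Y),
      (∀ j, S.MSummable (P j) (u j)) →
      S.MSummable ((List.ofFn u : List (X ⟶ Y)) : Multiset (X ⟶ Y)) t := by
  intro n
  induction n with
  | zero =>
    intro P t ht u hu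
    rw [Finset.univ_eq_empty, Finset.sum_empty] at ht
    rw [S.msummable_zero ht]
    simp only [List.ofFn_zero, Multiset.coe_nil]
    exact MSummable.nil
  | succ n ih =>
    intro P t ht u hu
    rw [Fin.sum_univ_succ] at ht
    obtain ⟨tb, htb⟩ := by
      rw [add_comm] at ht
      exact S.msummable_sub hS ht
    obtain ⟨hsum, he⟩ := S.msummable_add_inv hS (hu 0) htb t ht
    have hib := ih (fun j => P j.succ) tb htb (fun j => u j.succ) (fun j => hu j.succ)
    rw [List.ofFn_succ, ← Multiset.cons_coe]
    obtain ⟨hsum', he'⟩ := S.summable_comm hS hsum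
    rw [he, ← he']
    exact MSummable.cons hib hsum'

end SummablePairing

/-- a finite family is summable iff for every partition (possibly with
empty blocks) every block is summable and the family of block sums is summable;
moreover the total sum is the sum of the block sums. -/
theorem stmt5 {C : Type u} [Category.{v} C] (S : SummablePairing C)
    (hS : S.IsLeftSummability) {X Y : C} (m : Multiset (X ⟶ Y)) :
    ((∃ t, S.MSummable m t) ↔
      ∀ (n : ℕ) (P : Fin n → Multiset (X ⟶ Y)), m = ∑ j, P j →
        ∃ (u : Fin n → (X ⟶ Y)) (t : X ⟶ Y),
          (∀ j, S.MSummable (P j) (u j)) ∧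
          S.MSummable ((List.ofFn u : List (X ⟶ Y)) : Multiset (X ⟶ Y)) t) ∧
    (∀ t : X ⟶ Y, S.MSummable m t →
      ∀ (n : ℕ) (P : Fin n → Multiset (X ⟶ Y)), m = ∑ j, P j →
        ∀ u : Fin n → (X ⟶ Y), (∀ j, S.MSummable (P j) (u j)) →
          S.MSummable ((List.ofFn u : List (X ⟶ Y)) : Multiset (X ⟶ Y)) t) := by
  constructor
  · constructor
    · rintro ⟨t, ht⟩ n P hP
      have hex : ∀ j : Fin n, ∃ uj, S.MSummable (P j) uj := by
        intro j
        have hm : m = P j + ∑ i ∈ Finset.univ.erase j, P i := by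
          rw [hP, Finset.add_sum_erase _ P (Finset.mem_univ j)]
        rw [hm] at ht
        exact S.msummable_sub hS ht
      choose u hu using hex
      refine ⟨u, t, hu, ?_⟩
      exact S.msummable_parts hS n P t (hP ▸ ht) u hu
    · intro H
      obtain ⟨u, t, hu, -⟩ := H 1 (fun _ => m) (by simp)
      exact ⟨u 0, hu 0⟩
  · intro t ht n P hP u hu
    exact S.msummable_parts hS n P t (hP ▸ ht) u hu
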